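/- (Russo lower bound for increasing events.) Let T > 0, 0 ≤ h₀ < h, N ≥ 1, and let μ_t^N = μ^N_{T, h₀ + t(h−h₀)} be the torus Gibbs family on 𝕋_N; assume each μ_t^N satisfies the FKG inequality. Then for every increasing event A ⊆ {−1,+1}^{𝕋_N} and every t ∈ [0,1]: d/dt μ_t^N(A) ≥ ((h−h₀)/(𝔎T)) · (1 − E_{μ_t^N}[ω(𝐎)]) · Σ_{v ∈ 𝕋_N} μ_t^N(A ∩ Δ_v A). Moreover 1 − E_{μ_t^N}[ω(𝐎)] ≥ 2(1 + e^{(8+2h(t))/(𝔎T)})^{−1}, so the prefactor 1 − E_{μ_t^N}[ω(𝐎)] is bounded below by a positive constant depending only on T and an upper bound for h. -/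

import Mathlib

open MeasureTheory

noncomputable section

/-- Sites of the square lattice `ℤ²`. -/
abbrev Site : Type := ℤ × ℤ

/-- Spin configurations: `true` codes spin `+1`, `false` codes spin `−1`. -/
abbrev Config : Type := Site → Bool

/-- ℓ¹-distance on `ℤ²`. -/
def d1 (x y : Site) : ℤ := |x.1 - y.1| + |x.2 - y.2|

/-- ℓ∞-distance on `ℤ²`. -/
def dInf (x y : Site) : ℤ := max |x.1 - y.1| |x.2 - y.2|

/-- ℓ∞-norm on `ℤ²`. -/
def normInf (x : Site) : ℤ := max |x.1| |x.2|

/-- Adjacency (ℓ¹-distance one). -/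
def adj (x y : Site) : Prop := d1 x y = 1

/-- (*)-adjacency (ℓ∞-distance one). -/
def adjStar (x y : Site) : Prop := dInf x y = 1

/-- Generic connection: there is a nonempty `r`-path, all of whose vertices lie in `V`
and satisfy the spin condition `ok`, starting in `A` and ending in `B`. -/
def Conn (r : Site → Site → Prop) (ok : Site → Prop) (V A B : Set Site) : Prop :=
  ∃ γ : List Site, γ ≠ [] ∧ γ.Chain' r ∧ (∀ v ∈ γ, v ∈ V ∧ ok v) ∧
    (∃ a ∈ A, γ.head? = some a) ∧ (∃ b ∈ B, γ.getLast? = some b)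

/-- `A` is joined to `B` by a (+)-path inside `V`. -/
def PlusConn (ω : Config) (V A B : Set Site) : Prop :=
  Conn adj (fun v => ω v = true) V A B

/-- `A` is joined to `B` by a (−*)-path inside `V`. -/
def MinusConn (ω : Config) (V A B : Set Site) : Prop :=
  Conn adjStar (fun v => ω v = false) V A B

/-- The rectangle `[a,b] × [c,d]` of `ℤ²`. -/
def rect (a b c d : ℤ) : Set Site := {x : Site | a ≤ x.1 ∧ x.1 ≤ b ∧ c ≤ x.2 ∧ x.2 ≤ d}

/-- The box `S(n) = [−n,n]²`. -/
def Sbox (n : ℤ) : Set Site := rect (-n) n (-n) n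

/-- The box `S(y,n) = y + [−n,n]²`. -/
def SboxAt (y : Site) (n : ℤ) : Set Site := {x : Site | dInf x y ≤ n}

/-- Inner boundary `∂_in S(n) = {x : |x|_∞ = n}`. -/
def inBdry (n : ℤ) : Set Site := {x : Site | normInf x = n}

/-- Inner boundary of the shifted box `S(y,R)`. -/
def inBdryAt (y : Site) (R : ℤ) : Set Site := {x : Site | dInf x y = R}

def leftSide (n m : ℤ) : Set Site := {x : Site | x.1 = -n ∧ |x.2| ≤ m}

def rightSide (n m : ℤ) : Set Site := {x : Site | x.1 = n ∧ |x.2| ≤ m}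

/-- `A⁺(n,m)`: a horizontal (+)-crossing of `[−n,n] × [−m,m]`. -/
def Aplus (n m : ℤ) : Set Config :=
  {ω : Config | PlusConn ω (rect (-n) n (-m) m) (leftSide n m) (rightSide n m)}

/-- `A^{−*}(n,m)`: a horizontal (−*)-crossing of `[−n,n] × [−m,m]`. -/
def AminusStar (n m : ℤ) : Set Config :=
  {ω : Config | MinusConn ω (rect (-n) n (-m) m) (leftSide n m) (rightSide n m)}

def AplusN (n : ℕ) : Set Config := Aplus (n : ℤ) (n : ℤ)

/-- Probability of an event, as a real number. -/
def Pr {Ω : Type*} [MeasurableSpace Ω] (μ : Measure Ω) (A : Set Ω) : ℝ :=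
  (μ A).toReal

def configLE (ω ω' : Config) : Prop := ∀ v, ω v = true → ω' v = true

/-- Increasing events. -/
def IncreasingEvent (A : Set Config) : Prop :=
  ∀ ω ω' : Config, configLE ω ω' → ω ∈ A → ω' ∈ A

/-- The FKG inequality. -/
def FKG (μ : Measure Config) : Prop :=
  ∀ A B : Set Config, IncreasingEvent A → IncreasingEvent B →
    Pr μ A * Pr μ B ≤ Pr μ (A ∩ B)

/-- `A` depends only on the spins in `V`. -/
def ConfigDependsOn (A : Set Config) (V : Set Site) : Prop :=
  ∀ ω ω' : Config, (∀ v ∈ V, ω v = ω' v) → (ω ∈ A ↔ ω' ∈ A)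

/-- ℓ¹-distance between two finite sets of sites. -/
def finsetDist (V₁ V₂ : Finset Site) : ℝ :=
  sInf {r : ℝ | ∃ x ∈ V₁, ∃ y ∈ V₂, r = (d1 x y : ℝ)}

/-- Exponential mixing with constants `C, α`. -/
def ExpMixing (μ : Measure Config) (C α : ℝ) : Prop :=
  ∀ V₁ V₂ : Finset Site, Disjoint V₁ V₂ →
    ∀ A B : Set Config, ConfigDependsOn A (V₁ : Set Site) → ConfigDependsOn B (V₂ : Set Site) →
      |Pr μ (A ∩ B) - Pr μ A * Pr μ B| ≤
        C * (V₁.card : ℝ) * finsetDist V₁ V₂ *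
          Real.exp (-(α * finsetDist V₁ V₂)) * Pr μ B

def shiftConfig (f : Site → Site) (ω : Config) : Config := fun x => ω (f x)

/-- Invariance under translations, the 90°-rotation and the diagonal reflection. -/
def LatticeSymmetric (μ : Measure Config) : Prop :=
  (∀ z : Site, ∀ A : Set Config, μ (shiftConfig (fun x => x + z) ⁻¹' A) = μ A) ∧
  (∀ A : Set Config, μ (shiftConfig (fun x => (-x.2, x.1)) ⁻¹' A) = μ A) ∧
  (∀ A : Set Config, μ (shiftConfig (fun x => (x.2, x.1)) ⁻¹' A) = μ A)

/-- Finite energy with constant `c`: conditionally on everything else, each spin is `+`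
(resp. `−`) with probability at least `c`. -/
def FiniteEnergy (μ : Measure Config) (c : ℝ) : Prop :=
  ∀ v : Site, ∀ A : Set Config, ConfigDependsOn A ({v}ᶜ) →
    c * Pr μ A ≤ Pr μ (A ∩ {ω : Config | ω v = true}) ∧
      c * Pr μ A ≤ Pr μ (A ∩ {ω : Config | ω v = false})

/-- Exterior boundary of a finite set of sites. -/
def extBoundary (V : Finset Site) : Set Site :=
  {x : Site | x ∉ V ∧ ∃ y ∈ V, adj x y}

/-- Monotone Markov property: for every finite `V` there is a version of the conditional
distribution of the spins in `V` given the outside, which depends only on the exterior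
boundary spins and is stochastically increasing in them. -/
def MarkovMonotone (μ : Measure Config) : Prop :=
  ∀ V : Finset Site, ∃ q : Config → Measure Config,
    (∀ η, IsProbabilityMeasure (q η)) ∧
    (∀ η η' : Config, (∀ x ∈ extBoundary V, η x = η' x) → q η = q η') ∧
    (∀ η : Config, q η {ω : Config | ∀ x, x ∉ V → ω x = η x} = 1) ∧
    (∀ A : Set Config, MeasurableSet A → μ A = ∫⁻ η, q η A ∂μ) ∧
    (∀ η η' : Config, configLE η η' → ∀ A : Set Config, IncreasingEvent A →
      q η A ≤ q η' A)

/-- δ-crossing bounds on `[n₂, L)`. -/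
def CrossingBounds (μ : Measure Config) (δ : ℕ → ℝ) (n₂ L : ℕ) : Prop :=
  ∀ k n : ℕ, 1 ≤ k → n₂ ≤ n → n < L →
    δ k ≤ Pr μ (Aplus ((k : ℤ) * (n : ℤ)) (n : ℤ)) ∧
      δ k ≤ Pr μ (AminusStar ((k : ℤ) * (n : ℤ)) (n : ℤ))

/-- `{𝒜 ↔⁺ ℬ}`. -/
def connPlus (A B : Set Site) : Set Config := {ω : Config | PlusConn ω Set.univ A B}

/-- `{𝒜 ↔^{−*} ℬ}`. -/
def connMinusStar (A B : Set Site) : Set Config := {ω : Config | MinusConn ω Set.univ A B}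

def origin : Site := ((0 : ℤ), (0 : ℤ))

/-- One-arm event `{𝐎 ↔⁺ ∂_in S(n)}`. -/
def piArm (n : ℤ) : Set Config := connPlus {origin} (inBdry n)

def piArmStar (n : ℤ) : Set Config := connMinusStar {origin} (inBdry n)

/-- One-arm event with the path contained in `S(n)`. -/
def oneArmIn (n : ℤ) : Set Config := {ω : Config | PlusConn ω (Sbox n) {origin} (inBdry n)}

/-- `𝓑(1,0,R,n)`: a (+)-path contained in `S(n)` joining `∂_in S(R)` to `∂_in S(n)`. -/
def oneArmAnn (R n : ℤ) : Set Config :=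
  {ω : Config | PlusConn ω (Sbox n) (inBdry R) (inBdry n)}

/-- A circuit with respect to the adjacency relation `r`. -/
def IsCircuit (r : Site → Site → Prop) (γ : List Site) : Prop :=
  γ ≠ [] ∧ γ.Chain' r ∧ ∃ a b, γ.head? = some a ∧ γ.getLast? = some b ∧ r b a

def listMaxNorm (γ : List Site) : ℤ := (γ.map normInf).foldr max 0

/-- `γ` surrounds `B`: every `r`-path from `B` to a point beyond the extent of `γ`
meets `γ`. -/
def SurroundsBlocking (r : Site → Site → Prop) (γ : List Site) (B : Set Site) : Prop :=
  ∀ x ∈ B, ∀ ξ : List Site, ξ.Chain' r → ξ.head? = some x →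
    (∃ y, ξ.getLast? = some y ∧ listMaxNorm γ < normInf y) → ∃ v ∈ γ, v ∈ ξ

/-- There is a (+)-circuit inside `W` surrounding `B`. -/
def plusCircuitIn (ω : Config) (B W : Set Site) : Prop :=
  ∃ γ : List Site, IsCircuit adj γ ∧ (∀ v ∈ γ, v ∈ W ∧ ω v = true) ∧
    SurroundsBlocking adjStar γ B

/-- There is a (−*)-circuit inside `W` surrounding `B`. -/
def minusStarCircuitIn (ω : Config) (B W : Set Site) : Prop :=
  ∃ γ : List Site, IsCircuit adjStar γ ∧ (∀ v ∈ γ, v ∈ W ∧ ω v = false) ∧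
    SurroundsBlocking adj γ B

/-- The (+)-cluster of the origin. -/
def plusCluster (ω : Config) : Set Site := {v : Site | PlusConn ω Set.univ {origin} {v}}

/-- The event `n ≤ R < m` for the radius `R` of the cluster of the origin. -/
def radiusBetween (n m : ℤ) : Set Config :=
  {ω : Config | (∃ v ∈ plusCluster ω, n ≤ normInf v) ∧ ∀ v ∈ plusCluster ω, normInf v < m}

/-- The radius of the cluster of the origin. -/
def clusterRadius (ω : Config) : ℕ :=
  sSup {m : ℕ | ∃ v ∈ plusCluster ω, normInf v = (m : ℤ)}

def flipC (v : Site) (ω : Config) : Config := Function.update ω v (!ω v)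

/-- `Δ_v A`: the site `v` is pivotal for `A`. -/
def pivotal (v : Site) (A : Set Config) : Set Config :=
  {ω : Config | Xor' (ω ∈ A) (flipC v ω ∈ A)}

def boxFinset (n : ℕ) : Finset Site :=
  Finset.Icc (-(n : ℤ)) (n : ℤ) ×ˢ Finset.Icc (-(n : ℤ)) (n : ℤ)

/-- `Γ` separates `P` from `Q` inside `V` (with respect to `r`-paths). -/
def SeparatesIn (r : Site → Site → Prop) (V Γ P Q : Set Site) : Prop :=
  ¬ ∃ ξ : List Site, ξ ≠ [] ∧ ξ.Chain' r ∧ (∀ x ∈ ξ, x ∈ V ∧ x ∉ Γ) ∧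
    (∃ a ∈ P, ξ.head? = some a) ∧ (∃ b ∈ Q, ξ.getLast? = some b)

def IsPlusPathIn (ω : Config) (V : Set Site) (γ : List Site) : Prop :=
  γ ≠ [] ∧ γ.Chain' adj ∧ ∀ x ∈ γ, x ∈ V ∧ ω x = true

def IsMinusStarPathIn (ω : Config) (V : Set Site) (γ : List Site) : Prop :=
  γ ≠ [] ∧ γ.Chain' adjStar ∧ ∀ x ∈ γ, x ∈ V ∧ ω x = false

/-- `V(n) = [−n,n] × [−kn,kn]`. -/
def Vbox (n kn : ℤ) : Set Site := rect (-n) n (-kn) kn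

/-- A horizontal (*)-crossing of `V(n)`. -/
def IsHorizStarCrossing (n kn : ℤ) (γ : List Site) : Prop :=
  γ ≠ [] ∧ γ.Chain' adjStar ∧ (∀ x ∈ γ, x ∈ Vbox n kn) ∧
    (∃ a, γ.head? = some a ∧ a.1 = -n) ∧ (∃ b, γ.getLast? = some b ∧ b.1 = n)

/-- `U_n(γ)`: the part of `V(n)` above the crossing `γ`. -/
def aboveRegion (n kn : ℤ) (γ : List Site) : Set Site :=
  {x : Site | x ∈ Vbox n kn ∧ x ∉ γ ∧
    ∃ ξ : List Site, ξ.Chain' adj ∧ ξ.head? = some x ∧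
      (∀ y ∈ ξ, y ∈ Vbox n kn ∧ y ∉ γ) ∧ ∃ b, ξ.getLast? = some b ∧ b.2 = kn}

/-- `L_n(γ)`: the part of `V(n)` below the crossing `γ`. -/
def belowRegion (n kn : ℤ) (γ : List Site) : Set Site :=
  {x : Site | x ∈ Vbox n kn ∧ x ∉ γ ∧
    ∃ ξ : List Site, ξ.Chain' adj ∧ ξ.head? = some x ∧
      (∀ y ∈ ξ, y ∈ Vbox n kn ∧ y ∉ γ) ∧ ∃ b, ξ.getLast? = some b ∧ b.2 = -kn}

/-- `ΔU(γ,1)`: points of `U` at ℓ¹-distance one from `γ`. -/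
def fringe (U : Set Site) (γ : List Site) : Set Site :=
  {x : Site | x ∈ U ∧ ∃ y ∈ γ, d1 x y = 1}

def bdryMinusTop (n : ℤ) : Set Site := {x : Site | normInf x = n ∧ x.2 ≠ n}

/-- The two-arm half-plane event `E₂(n)`. -/
def E2 (n : ℤ) : Set Config :=
  {ω : Config | MinusConn ω (Sbox n) {((0 : ℤ), n)} (bdryMinusTop n) ∧
    PlusConn ω (Sbox n) {((-1 : ℤ), n)} (bdryMinusTop n)}

def E2star (n : ℤ) : Set Config :=
  {ω : Config | PlusConn ω (Sbox n) {((0 : ℤ), n)} (bdryMinusTop n) ∧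
    MinusConn ω (Sbox n) {((-1 : ℤ), n)} (bdryMinusTop n)}

/-- The two-arm half-plane box event `𝓑⁺(1,1,R,n)`. -/
def B2 (R n : ℤ) : Set Config :=
  {ω : Config |
    PlusConn ω (Sbox n \ SboxAt ((0 : ℤ), n - R) (R - 1))
      (inBdryAt ((0 : ℤ), n - R) R) (bdryMinusTop n) ∧
    MinusConn ω (Sbox n \ SboxAt ((0 : ℤ), n - R) (R - 1))
      (inBdryAt ((0 : ℤ), n - R) R) (bdryMinusTop n)}

/-- The three-arm half-plane event `E₃(n)`. -/
def E3 (n : ℤ) : Set Config :=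
  {ω : Config | ω ((0 : ℤ), n) = true ∧
    (∃ r₁ r₃ : List Site, IsPlusPathIn ω (Sbox n) r₁ ∧ IsPlusPathIn ω (Sbox n) r₃ ∧
      r₁.head? = some ((-1 : ℤ), n) ∧ r₃.head? = some ((1 : ℤ), n) ∧
      (∃ b ∈ inBdry n, r₁.getLast? = some b) ∧ (∃ b ∈ inBdry n, r₃.getLast? = some b) ∧
      ∀ x ∈ r₁, x ∉ r₃) ∧
    MinusConn ω (Sbox n) {((0 : ℤ), n - 1)} (inBdry n)}

def E3star (n : ℤ) : Set Config :=
  {ω : Config | ω ((0 : ℤ), n) = false ∧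
    (∃ r₁ r₃ : List Site, IsMinusStarPathIn ω (Sbox n) r₁ ∧
      IsMinusStarPathIn ω (Sbox n) r₃ ∧
      r₁.head? = some ((-1 : ℤ), n) ∧ r₃.head? = some ((1 : ℤ), n) ∧
      (∃ b ∈ inBdry n, r₁.getLast? = some b) ∧ (∃ b ∈ inBdry n, r₃.getLast? = some b) ∧
      ∀ x ∈ r₁, x ∉ r₃) ∧
    PlusConn ω (Sbox n) {((0 : ℤ), n - 1)} (inBdry n)}

/-- The half-plane annulus `(S(n) ∖ S(R)) ∩ {x² ≤ 0}` (keeping `∂_in S(R)`). -/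
def halfAnn (R n : ℤ) : Set Site := (Sbox n \ Sbox (R - 1)) ∩ {x : Site | x.2 ≤ 0}

/-- The three-arm half-plane box event `𝓑̃⁺(2,1,R,n)`. -/
def B3 (R n : ℤ) : Set Config :=
  {ω : Config | ∃ r₁ r₂ s : List Site,
    IsPlusPathIn ω (halfAnn R n) r₁ ∧ IsPlusPathIn ω (halfAnn R n) r₂ ∧
    IsMinusStarPathIn ω (halfAnn R n) s ∧
    (∃ a ∈ inBdry R, r₁.head? = some a) ∧ (∃ b ∈ inBdry n, r₁.getLast? = some b) ∧
    (∃ a ∈ inBdry R, r₂.head? = some a) ∧ (∃ b ∈ inBdry n, r₂.getLast? = some b) ∧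
    (∃ a ∈ inBdry R, s.head? = some a) ∧ (∃ b ∈ inBdry n, s.getLast? = some b) ∧
    (∀ x ∈ r₁, x ∉ r₂) ∧
    SeparatesIn adj (halfAnn R n) {x : Site | x ∈ s} {x : Site | x ∈ r₁} {x : Site | x ∈ r₂}}

def B3star (R n : ℤ) : Set Config :=
  {ω : Config | ∃ r₁ r₂ s : List Site,
    IsMinusStarPathIn ω (halfAnn R n) r₁ ∧ IsMinusStarPathIn ω (halfAnn R n) r₂ ∧
    IsPlusPathIn ω (halfAnn R n) s ∧
    (∃ a ∈ inBdry R, r₁.head? = some a) ∧ (∃ b ∈ inBdry n, r₁.getLast? = some b) ∧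
    (∃ a ∈ inBdry R, r₂.head? = some a) ∧ (∃ b ∈ inBdry n, r₂.getLast? = some b) ∧
    (∃ a ∈ inBdry R, s.head? = some a) ∧ (∃ b ∈ inBdry n, s.getLast? = some b) ∧
    (∀ x ∈ r₁, x ∉ r₂) ∧
    SeparatesIn adjStar (halfAnn R n) {x : Site | x ∈ s} {x : Site | x ∈ r₁} {x : Site | x ∈ r₂}}

/-- The four-arm event `Γ(v, S(m))`. -/
def gammaEvent (v : Site) (m : ℤ) : Set Config :=
  {ω : Config | ∃ r₁ r₃ r₂ r₄ : List Site,
    (r₁.Chain' adj ∧ r₁.head? = some v ∧ (∃ b ∈ inBdry m, r₁.getLast? = some b) ∧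
      ∀ x ∈ r₁, x ∈ Sbox m ∧ (x = v ∨ ω x = true)) ∧
    (r₃.Chain' adj ∧ r₃.head? = some v ∧ (∃ b ∈ inBdry m, r₃.getLast? = some b) ∧
      ∀ x ∈ r₃, x ∈ Sbox m ∧ (x = v ∨ ω x = true)) ∧
    (∀ x ∈ r₁, x ∈ r₃ → x = v) ∧
    (r₂.Chain' adjStar ∧ (∃ a, r₂.head? = some a ∧ adjStar a v) ∧
      (∃ b ∈ inBdry m, r₂.getLast? = some b) ∧ ∀ x ∈ r₂, x ∈ Sbox m ∧ ω x = false) ∧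
    (r₄.Chain' adjStar ∧ (∃ a, r₄.head? = some a ∧ adjStar a v) ∧
      (∃ b ∈ inBdry m, r₄.getLast? = some b) ∧ ∀ x ∈ r₄, x ∈ Sbox m ∧ ω x = false) ∧
    (∀ x ∈ r₂, x ∉ r₄) ∧
    SeparatesIn adjStar (Sbox m) {x : Site | x ∈ r₁ ∨ x ∈ r₃}
      {x : Site | x ∈ r₂} {x : Site | x ∈ r₄}}

/-! ### The torus and its Gibbs measures -/

/-- Vertices of the torus `𝕋_N` (the box `[−N,N]²` with periodic boundary). -/
abbrev TorusV (N : ℕ) : Type := ZMod (2 * N + 1) × ZMod (2 * N + 1)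

abbrev TorusConfig (N : ℕ) : Type := TorusV N → Bool

/-- spin value `±1` of a Boolean spin. -/
def spinVal (b : Bool) : ℝ := if b then 1 else -1

/-- `Σ_{{x,y}} σ(x)σ(y) + h Σ_x σ(x)`, the first sum over (unordered) adjacent pairs. -/
def torusEnergy (N : ℕ) (h : ℝ) (σ : TorusConfig N) : ℝ :=
  (∑ x : TorusV N,
      (spinVal (σ x) * spinVal (σ (x + (1, 0))) +
        spinVal (σ x) * spinVal (σ (x + (0, 1)))))
    + h * ∑ x : TorusV N, spinVal (σ x)

def gibbsWeight (N : ℕ) (K T h : ℝ) (σ : TorusConfig N) : ℝ :=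
  Real.exp ((K * T)⁻¹ * torusEnergy N h σ)

/-- The torus Gibbs measure `μ^N_{T,h}` (with Boltzmann constant `K`). -/
def torusGibbs (N : ℕ) (K T h : ℝ) : Measure (TorusConfig N) :=
  (ENNReal.ofReal (∑ σ : TorusConfig N, gibbsWeight N K T h σ))⁻¹ •
    ∑ σ : TorusConfig N, ENNReal.ofReal (gibbsWeight N K T h σ) • Measure.dirac σ

/-- `μ_t^N = μ^N_{T, h₀ + t(h−h₀)}`. -/
def gibbsPath (N : ℕ) (K T h₀ h : ℝ) (t : ℝ) : Measure (TorusConfig N) :=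
  torusGibbs N K T (h₀ + t * (h - h₀))

def torusEmb (N : ℕ) (x : Site) : TorusV N :=
  ((x.1 : ZMod (2 * N + 1)), (x.2 : ZMod (2 * N + 1)))

/-- The periodic lift of a torus configuration to `ℤ²`. -/
def liftConfig (N : ℕ) (σ : TorusConfig N) : Config := fun x => σ (torusEmb N x)

/-- `μ_t^N`, viewed (via the periodic lift) as a measure on configurations on `ℤ²`;
events on sub-boxes of `𝕋_N` are read through this measure. -/
def nuMeas (N : ℕ) (K T h₀ h : ℝ) (t : ℝ) : Measure Config :=
  (gibbsPath N K T h₀ h t).map (liftConfig N)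

def IncreasingEventT {N : ℕ} (A : Set (TorusConfig N)) : Prop :=
  ∀ σ σ' : TorusConfig N, (∀ v, σ v = true → σ' v = true) → σ ∈ A → σ' ∈ A

def FKGT {N : ℕ} (μ : Measure (TorusConfig N)) : Prop :=
  ∀ A B : Set (TorusConfig N), IncreasingEventT A → IncreasingEventT B →
    Pr μ A * Pr μ B ≤ Pr μ (A ∩ B)

def flipT {N : ℕ} (v : TorusV N) (σ : TorusConfig N) : TorusConfig N :=
  Function.update σ v (!σ v)

def pivotalT {N : ℕ} (v : TorusV N) (A : Set (TorusConfig N)) : Set (TorusConfig N) :=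
  {σ : TorusConfig N | Xor' (σ ∈ A) (flipT v σ ∈ A)}

open ProbabilityTheory Real

/-!
Along the path, `μ_s` has weights `exp (H σ + s * B σ)` with `B = (h - h₀) / (𝔎T) · Σ_v σ(v)`,
so `d/dt μ_t(A) = (h - h₀) / (𝔎T) · Σ_v Cov_t(1_A, σ(v))`. For increasing `A` write
`1_A = 1_{A ∩ Δ_v A} + 1_{A_v}` with `A_v` the increasing event that `A` still occurs after setting
the spin at `v` to `−`. Since `σ(v) = +1` on `A ∩ Δ_v A`, that part contributes exactly
`(1 - E σ(v)) μ(A ∩ Δ_v A)`, and `Cov(1_{A_v}, σ(v)) = 2 Cov(1_{A_v}, 1_{σ(v) = +}) ≥ 0` by FKG;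
by translation invariance `E σ(v) = E σ(𝐎)`.

For the second bound, `1 - E σ(𝐎) = 2 μ(σ(𝐎) = −)`, and raising the spin at `𝐎` increases the
energy by at most `8 + 2h` (four bonds and the field), so
`μ(σ(𝐎) = +) ≤ e^{(8 + 2h)/(𝔎T)} μ(σ(𝐎) = −)`.
-/

section GibbsMeasure

variable {α : Type*} [Fintype α]

def gibbsMeasure [MeasurableSpace α] (H : α → ℝ) : Measure α :=
  (ENNReal.ofReal (∑ σ, exp (H σ)))⁻¹ • ∑ σ, ENNReal.ofReal (exp (H σ)) • Measure.dirac σ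

variable [Nonempty α]

lemma sum_exp_pos (H : α → ℝ) : 0 < ∑ σ, exp (H σ) :=
  Finset.sum_pos (fun _ _ => exp_pos _) Finset.univ_nonempty

variable [MeasurableSpace α] [DiscreteMeasurableSpace α]

lemma integral_gibbsMeasure (H f : α → ℝ) :
    ∫ σ, f σ ∂gibbsMeasure H = (∑ σ, f σ * exp (H σ)) / ∑ σ, exp (H σ) := by
  rw [gibbsMeasure, integral_smul_measure,
    integral_finsetSum_measure fun _ _ => Integrable.of_finite.smul_measure ENNReal.ofReal_ne_top]
  simp only [integral_smul_measure, integral_dirac, ENNReal.toReal_inv,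
    ENNReal.toReal_ofReal (sum_exp_pos H).le, ENNReal.toReal_ofReal (exp_pos _).le, smul_eq_mul]
  rw [inv_mul_eq_div]
  simp only [mul_comm]

instance (H : α → ℝ) : IsProbabilityMeasure (gibbsMeasure H) := by
  constructor
  simp only [gibbsMeasure, Measure.smul_apply, Measure.coe_finsetSum, Finset.sum_apply,
    measure_univ, smul_eq_mul, mul_one]
  rw [← ENNReal.ofReal_sum_of_nonneg fun σ _ => (exp_pos _).le]
  exact ENNReal.inv_mul_cancel (by simpa using sum_exp_pos H) ENNReal.ofReal_ne_top

lemma hasDerivAt_integral_gibbsMeasure (H B f : α → ℝ) (t : ℝ) :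
    HasDerivAt (fun s => ∫ σ, f σ ∂gibbsMeasure (fun σ => H σ + s * B σ))
      cov[f, B; gibbsMeasure (fun σ => H σ + t * B σ)] t := by
  have hw : ∀ g : α → ℝ, HasDerivAt (fun s => ∑ σ, g σ * exp (H σ + s * B σ))
      (∑ σ, g σ * B σ * exp (H σ + t * B σ)) t := fun g =>
    HasDerivAt.fun_sum fun σ _ => by
      simpa [mul_comm, mul_left_comm, mul_assoc] using
        (((hasDerivAt_mul_const (B σ)).const_add (H σ)).exp).const_mul (g σ)
  have hZ := sum_exp_pos fun σ => H σ + t * B σ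
  rw [covariance_eq_sub .of_discrete .of_discrete]
  simp only [integral_gibbsMeasure, Pi.mul_apply]
  refine ((hw f).fun_div (by simpa using hw 1) hZ.ne').congr_deriv ?_
  generalize ∑ σ, exp (H σ + t * B σ) = Z at hZ ⊢
  generalize ∑ σ, f σ * B σ * exp (H σ + t * B σ) = SfB
  generalize ∑ σ, f σ * exp (H σ + t * B σ) = Sf
  generalize ∑ σ, B σ * exp (H σ + t * B σ) = SB
  field_simp

lemma integral_comp_gibbsMeasure (H f : α → ℝ) (e : α ≃ α) (he : ∀ σ, H (e σ) = H σ) :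
    ∫ σ, f (e σ) ∂gibbsMeasure H = ∫ σ, f σ ∂gibbsMeasure H := by
  simp only [integral_gibbsMeasure]
  rw [← e.sum_comp fun σ => f σ * exp (H σ)]
  simp only [he]

lemma gibbsMeasure_real_image_le (H : α → ℝ) (e : α ≃ α) {s : Set α} {c : ℝ}
    (hc : ∀ σ ∈ s, H (e σ) ≤ H σ + c) :
    (gibbsMeasure H).real (e '' s) ≤ exp c * (gibbsMeasure H).real s := by
  simp only [← integral_indicator_one (MeasurableSet.of_discrete), integral_gibbsMeasure]
  rw [mul_div_assoc', div_le_div_iff_of_pos_right (sum_exp_pos H), Finset.mul_sum,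
    ← e.sum_comp]
  refine Finset.sum_le_sum fun σ _ => ?_
  by_cases hσ : σ ∈ s
  · simp only [Set.indicator_of_mem (e.injective.mem_set_image.2 hσ), Set.indicator_of_mem hσ,
      Pi.one_apply, one_mul, ← exp_add]
    exact exp_le_exp.2 (by linarith [hc σ hσ])
  · simp [hσ]

lemma inv_one_add_exp_le_gibbsMeasure_real (H : α → ℝ) (e : α ≃ α) {s : Set α} {c : ℝ}
    (hs : e '' s = sᶜ) (hc : ∀ σ ∈ s, H (e σ) ≤ H σ + c) :
    (1 + exp c)⁻¹ ≤ (gibbsMeasure H).real s := by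
  have h := gibbsMeasure_real_image_le H e hc
  rw [hs, probReal_compl_eq_one_sub .of_discrete] at h
  rw [inv_le_iff_one_le_mul₀ (by positivity)]
  linarith

end GibbsMeasure

section Pivotal

variable {N : ℕ} (v : TorusV N) {A : Set (TorusConfig N)}

def lowerAt (A : Set (TorusConfig N)) : Set (TorusConfig N) :=
  {σ | Function.update σ v false ∈ A}

lemma update_false_le_of_forall_ne (σ σ' : TorusConfig N)
    (hσ : ∀ x ≠ v, σ x = true → σ' x = true) :
    ∀ x, Function.update σ v false x = true → σ' x = true := by
  intro x hx
  by_cases hxv : x = v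
  · subst hxv; simp at hx
  · rw [Function.update_of_ne hxv] at hx; exact hσ x hxv hx

lemma increasingEventT_lowerAt (hA : IncreasingEventT A) : IncreasingEventT (lowerAt v A) :=
  fun σ σ' hle hσ => hA _ _ (update_false_le_of_forall_ne v σ _ fun x hxv hx => by
    rw [Function.update_of_ne hxv]; exact hle x hx) hσ

lemma IncreasingEventT.lowerAt_subset (hA : IncreasingEventT A) : lowerAt v A ⊆ A :=
  fun σ hσ => hA _ σ (update_false_le_of_forall_ne v σ σ fun _ _ => id) hσ

lemma diff_lowerAt_subset : A \ lowerAt v A ⊆ {σ | σ v = true} := by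
  rintro σ ⟨hσA, hσB⟩
  by_contra hv
  rw [Set.mem_ofPred_eq, Bool.not_eq_true] at hv
  exact hσB (by rwa [lowerAt, Set.mem_ofPred_eq, ← hv, Function.update_eq_self])

lemma IncreasingEventT.inter_pivotalT (hA : IncreasingEventT A) :
    A ∩ pivotalT v A = A \ lowerAt v A := by
  ext σ
  simp only [Set.mem_inter_iff, Set.mem_sdiff, and_congr_right_iff]
  intro hσA
  change Xor (σ ∈ A) (flipT v σ ∈ A) ↔ Function.update σ v false ∉ A
  simp only [hσA, xor_true]
  refine not_congr ⟨fun hflip => ?_,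
    fun hB => hA _ _ (update_false_le_of_forall_ne v σ _ fun x hxv hx => ?_) hB⟩
  · cases hv : σ v
    · rwa [← hv, Function.update_eq_self]
    · simpa [flipT, hv] using hflip
  · rwa [flipT, Function.update_of_ne hxv]

end Pivotal

lemma covariance_indicator_one {Ω : Type*} [MeasurableSpace Ω] (μ : Measure Ω)
    [IsProbabilityMeasure μ] {s t : Set Ω} (hs : MeasurableSet s) (ht : MeasurableSet t) :
    cov[s.indicator 1, t.indicator 1; μ] = μ.real (s ∩ t) - μ.real s * μ.real t := by
  rw [covariance_eq_sub (X := s.indicator 1) (Y := t.indicator 1)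
    (memLp_indicator_const 2 hs 1 (.inr (measure_ne_top μ s)))
    (memLp_indicator_const 2 ht 1 (.inr (measure_ne_top μ t))), ← Set.inter_indicator_one,
    integral_indicator_one (hs.inter ht), integral_indicator_one hs, integral_indicator_one ht]

section SpinCovariance

variable {N : ℕ} (μ : Measure (TorusConfig N)) [IsProbabilityMeasure μ] (v : TorusV N)
  {A : Set (TorusConfig N)}

lemma spinVal_eq_indicator :
    (fun σ : TorusConfig N => spinVal (σ v)) =
      fun σ => 2 * {σ : TorusConfig N | σ v = true}.indicator 1 σ - 1 := by
  funext σ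
  cases hv : σ v <;> norm_num [spinVal, Set.indicator, hv]

lemma FKGT.covariance_indicator_spinVal_nonneg (hμ : FKGT μ) {B : Set (TorusConfig N)}
    (hB : IncreasingEventT B) : 0 ≤ cov[B.indicator 1, fun σ => spinVal (σ v); μ] := by
  rw [spinVal_eq_indicator, covariance_sub_const_right .of_finite, covariance_const_mul_right,
    covariance_indicator_one μ .of_discrete .of_discrete]
  have := hμ B {σ | σ v = true} hB fun σ σ' hle hσ => hle v hσ
  simp only [Pr, ← measureReal_def] at this
  linarith

lemma covariance_indicator_spinVal_ge (hμ : FKGT μ) (hA : IncreasingEventT A) :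
    (1 - ∫ σ, spinVal (σ v) ∂μ) * Pr μ (A ∩ pivotalT v A) ≤
      cov[A.indicator 1, fun σ => spinVal (σ v); μ] := by
  have hsplit : A.indicator (1 : TorusConfig N → ℝ) =
      (A \ lowerAt v A).indicator 1 + (lowerAt v A).indicator 1 := by
    rw [Set.indicator_sdiff (hA.lowerAt_subset v), sub_add_cancel]
  have hpiv : (A \ lowerAt v A).indicator (1 : TorusConfig N → ℝ) * (fun σ => spinVal (σ v)) =
      (A \ lowerAt v A).indicator 1 := by
    funext σ
    by_cases hσ : σ ∈ A \ lowerAt v A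
    · have hv : σ v = true := diff_lowerAt_subset v hσ
      simp [hσ, spinVal, hv]
    · simp [hσ]
  rw [hsplit, covariance_add_left .of_discrete .of_discrete .of_discrete,
    covariance_eq_sub .of_discrete .of_discrete, hpiv, integral_indicator_one .of_discrete,
    hA.inter_pivotalT, Pr, ← measureReal_def]
  have := hμ.covariance_indicator_spinVal_nonneg μ v (increasingEventT_lowerAt v hA)
  linarith

lemma integral_spinVal_eq_one_sub :
    ∫ σ, spinVal (σ v) ∂μ = 1 - 2 * μ.real {σ | σ v = false} := by
  have hspin : (fun σ : TorusConfig N => spinVal (σ v)) =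
      fun σ => 1 - 2 * {σ : TorusConfig N | σ v = false}.indicator 1 σ := by
    funext σ
    cases hv : σ v <;> norm_num [spinVal, Set.indicator, hv]
  rw [hspin, integral_sub (integrable_const 1) (Integrable.of_finite), integral_const_mul,
    integral_indicator_one .of_discrete, integral_const, probReal_univ, one_smul]

end SpinCovariance

lemma spinVal_mul_sub_spinVal_mul_le (a b c d : Bool) :
    spinVal a * spinVal b - spinVal c * spinVal d ≤ 2 := by
  cases a <;> cases b <;> cases c <;> cases d <;> norm_num [spinVal]

/-- Changing one spin changes only the two bonds `{v - e, v}` and `{v, v + e}`. -/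
lemma sum_bond_update_le {G : Type*} [AddGroup G] [Fintype G] [DecidableEq G]
    (σ : G → Bool) (v e : G) (b : Bool) :
    ∑ x, spinVal (Function.update σ v b x) * spinVal (Function.update σ v b (x + e)) ≤
      ∑ x, spinVal (σ x) * spinVal (σ (x + e)) + 4 := by
  rw [← sub_le_iff_le_add', ← Finset.sum_sub_distrib]
  have hbonds : ∀ x ∉ ({v, v - e} : Finset G),
      spinVal (Function.update σ v b x) * spinVal (Function.update σ v b (x + e)) -
        spinVal (σ x) * spinVal (σ (x + e)) = 0 := by
    intro x hx
    simp only [Finset.mem_insert, Finset.mem_singleton, not_or] at hx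
    rw [Function.update_of_ne hx.1, Function.update_of_ne fun h => hx.2 (eq_sub_of_add_eq h),
      sub_self]
  calc _ = ∑ x ∈ {v, v - e}, (spinVal (Function.update σ v b x) *
        spinVal (Function.update σ v b (x + e)) - spinVal (σ x) * spinVal (σ (x + e))) :=
        (Finset.sum_subset (Finset.subset_univ _) fun x _ hx => hbonds x hx).symm
    _ ≤ ∑ _x ∈ ({v, v - e} : Finset G), (2 : ℝ) :=
        Finset.sum_le_sum fun x _ => spinVal_mul_sub_spinVal_mul_le _ _ _ _
    _ ≤ 4 := by
        rw [Finset.sum_const, nsmul_eq_mul]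
        have : (({v, v - e} : Finset G).card : ℝ) ≤ 2 := by exact_mod_cast Finset.card_le_two
        linarith

section TorusGibbs

variable {N : ℕ}

def magnetization (σ : TorusConfig N) : ℝ := ∑ x, spinVal (σ x)

lemma magnetization_update_true {σ : TorusConfig N} {v : TorusV N} (hv : σ v = false) :
    magnetization (Function.update σ v true) = magnetization σ + 2 := by
  have hdiff : ∑ x, (spinVal (Function.update σ v true x) - spinVal (σ x)) = 2 := by
    rw [Finset.sum_eq_single v (fun x _ hx => by rw [Function.update_of_ne hx, sub_self])
      (by simp)]
    norm_num [spinVal, hv]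
  rw [Finset.sum_sub_distrib] at hdiff
  unfold magnetization
  linarith

lemma torusEnergy_add_field (h h' : ℝ) (σ : TorusConfig N) :
    torusEnergy N (h + h') σ = torusEnergy N h σ + h' * magnetization σ := by
  simp only [torusEnergy, magnetization]
  ring

lemma torusEnergy_comp_add (h : ℝ) (σ : TorusConfig N) (v : TorusV N) :
    torusEnergy N h (fun x => σ (x + v)) = torusEnergy N h σ := by
  simp only [torusEnergy]
  congr 1
  · exact Fintype.sum_equiv (Equiv.addRight v) _ _ fun x => by
      simp only [Equiv.coe_addRight, add_right_comm]
  · congr 1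
    exact Fintype.sum_equiv (Equiv.addRight v) _ _ fun x => rfl

lemma torusEnergy_update_true_le (h : ℝ) {σ : TorusConfig N} {v : TorusV N} (hv : σ v = false) :
    torusEnergy N h (Function.update σ v true) ≤ torusEnergy N h σ + (8 + 2 * h) := by
  have h₁ := sum_bond_update_le σ v (1, 0) true
  have h₂ := sum_bond_update_le σ v (0, 1) true
  change _ + h * magnetization _ ≤ _ + h * magnetization _ + _
  rw [magnetization_update_true hv, Finset.sum_add_distrib, Finset.sum_add_distrib]
  linarith

lemma torusGibbs_eq_gibbsMeasure (K T h : ℝ) :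
    torusGibbs N K T h = gibbsMeasure fun σ => (K * T)⁻¹ * torusEnergy N h σ :=
  rfl

instance (K T h : ℝ) : IsProbabilityMeasure (torusGibbs N K T h) :=
  inferInstanceAs (IsProbabilityMeasure (gibbsMeasure _))

instance (K T h₀ h t : ℝ) : IsProbabilityMeasure (gibbsPath N K T h₀ h t) :=
  inferInstanceAs (IsProbabilityMeasure (torusGibbs _ _ _ _))

lemma gibbsPath_eq_gibbsMeasure (K T h₀ h s : ℝ) :
    gibbsPath N K T h₀ h s = gibbsMeasure fun σ =>
      (K * T)⁻¹ * torusEnergy N h₀ σ + s * ((K * T)⁻¹ * (h - h₀) * magnetization σ) := by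
  rw [gibbsPath, torusGibbs_eq_gibbsMeasure]
  congr 1
  funext σ
  rw [torusEnergy_add_field]
  ring

lemma integral_spinVal_torusGibbs_eq (K T h : ℝ) (v w : TorusV N) :
    ∫ σ, spinVal (σ v) ∂torusGibbs N K T h = ∫ σ, spinVal (σ w) ∂torusGibbs N K T h := by
  let shift : TorusConfig N ≃ TorusConfig N :=
    (Equiv.subRight (v - w)).arrowCongr (Equiv.refl Bool)
  rw [torusGibbs_eq_gibbsMeasure, ← integral_comp_gibbsMeasure _ (fun σ => spinVal (σ w)) shift
    fun σ => congrArg ((K * T)⁻¹ * ·) (torusEnergy_comp_add h σ (v - w))]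
  simp [shift]

lemma two_mul_inv_le_one_sub_integral_spinVal {K T : ℝ} (hK : 0 < K) (hT : 0 < T) (h : ℝ)
    (v : TorusV N) :
    2 * (1 + exp ((8 + 2 * h) / (K * T)))⁻¹ ≤ 1 - ∫ σ, spinVal (σ v) ∂torusGibbs N K T h := by
  have hinv : Function.LeftInverse (flipT v) (flipT v) := fun σ => by simp [flipT]
  let flip : TorusConfig N ≃ TorusConfig N := ⟨flipT v, flipT v, hinv, hinv⟩
  have himage : flip '' {σ | σ v = false} = {σ | σ v = false}ᶜ := by
    rw [Equiv.image_eq_preimage_symm]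
    ext σ
    simp [flip, flipT]
  have henergy : ∀ σ ∈ {σ : TorusConfig N | σ v = false},
      (K * T)⁻¹ * torusEnergy N h (flip σ) ≤
        (K * T)⁻¹ * torusEnergy N h σ + (8 + 2 * h) / (K * T) := by
    intro σ hv
    rw [Set.mem_ofPred_eq] at hv
    have hflipσ : flip σ = Function.update σ v true := by simp [flip, flipT, hv]
    rw [hflipσ, div_eq_inv_mul, ← mul_add]
    gcongr
    exact torusEnergy_update_true_le h hv
  rw [integral_spinVal_eq_one_sub, torusGibbs_eq_gibbsMeasure]
  linarith [inv_one_add_exp_le_gibbsMeasure_real (fun σ => (K * T)⁻¹ * torusEnergy N h σ) flip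
    himage henergy]

lemma hasDerivAt_pr_gibbsPath (K T h₀ h : ℝ) (A : Set (TorusConfig N)) (t : ℝ) :
    HasDerivAt (fun s => Pr (gibbsPath N K T h₀ h s) A)
      ((h - h₀) / (K * T) *
        ∑ v, cov[A.indicator 1, fun σ => spinVal (σ v); gibbsPath N K T h₀ h t]) t := by
  have := hasDerivAt_integral_gibbsMeasure (fun σ => (K * T)⁻¹ * torusEnergy N h₀ σ)
    (fun σ => (K * T)⁻¹ * (h - h₀) * magnetization σ) (A.indicator 1) t
  simp only [← gibbsPath_eq_gibbsMeasure, integral_indicator_one MeasurableSet.of_discrete,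
    covariance_const_mul_right] at this
  refine this.congr_deriv ?_
  rw [show (magnetization : TorusConfig N → ℝ) = fun σ => ∑ v, spinVal (σ v) from rfl,
    covariance_fun_sum_right (fun _ => .of_discrete) .of_discrete]
  ring

end TorusGibbs

theorem statement_9_general (N : ℕ) (K T h₀ h : ℝ) (hK : 0 < K) (hT : 0 < T)
    (hh : h₀ < h)
    (hfkg : ∀ t ∈ Set.Icc (0 : ℝ) 1, FKGT (gibbsPath N K T h₀ h t))
    (A : Set (TorusConfig N)) (hA : IncreasingEventT A) :
    ∀ t ∈ Set.Icc (0 : ℝ) 1,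
      (((h - h₀) / (K * T)) *
          (1 - ∫ σ, spinVal (σ ((0, 0) : TorusV N)) ∂(gibbsPath N K T h₀ h t)) *
          ∑ v : TorusV N, Pr (gibbsPath N K T h₀ h t) (A ∩ pivotalT v A)
        ≤ deriv (fun s => Pr (gibbsPath N K T h₀ h s) A) t) ∧
      2 * (1 + Real.exp ((8 + 2 * (h₀ + t * (h - h₀))) / (K * T)))⁻¹ ≤
        1 - ∫ σ, spinVal (σ ((0, 0) : TorusV N)) ∂(gibbsPath N K T h₀ h t) := by
  intro t ht
  refine ⟨?_, two_mul_inv_le_one_sub_integral_spinVal hK hT _ _⟩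
  rw [(hasDerivAt_pr_gibbsPath K T h₀ h A t).deriv, mul_assoc, Finset.mul_sum]
  have hrate : 0 ≤ (h - h₀) / (K * T) := div_nonneg (sub_nonneg.2 hh.le) (by positivity)
  gcongr with v
  rw [gibbsPath, integral_spinVal_torusGibbs_eq K T _ (0, 0) v]
  exact covariance_indicator_spinVal_ge _ v (hfkg t ht) hA

/-- Russo lower bound for increasing events on the torus. -/
theorem statement_9 (N : ℕ) (hN : 1 ≤ N) (K T h₀ h : ℝ) (hK : 0 < K) (hT : 0 < T)
    (hh₀ : 0 ≤ h₀) (hh : h₀ < h)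
    (hfkg : ∀ t ∈ Set.Icc (0 : ℝ) 1, FKGT (gibbsPath N K T h₀ h t))
    (A : Set (TorusConfig N)) (hA : IncreasingEventT A) :
    ∀ t ∈ Set.Icc (0 : ℝ) 1,
      (((h - h₀) / (K * T)) *
          (1 - ∫ σ, spinVal (σ ((0, 0) : TorusV N)) ∂(gibbsPath N K T h₀ h t)) *
          ∑ v : TorusV N, Pr (gibbsPath N K T h₀ h t) (A ∩ pivotalT v A)
        ≤ deriv (fun s => Pr (gibbsPath N K T h₀ h s) A) t) ∧
      2 * (1 + Real.exp ((8 + 2 * (h₀ + t * (h - h₀))) / (K * T)))⁻¹ ≤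
        1 - ∫ σ, spinVal (σ ((0, 0) : TorusV N)) ∂(gibbsPath N K T h₀ h t) :=
  statement_9_general N K T h₀ h hK hT hh hfkg A hA
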